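/- arXiv:0711.2403 — 3 statements merged into one kernel-verified Lean document; each statement's English description precedes it below -/
import Mathlib

section
/- The coefficient σ(t) = sin(t^α)/(1+t) with 0 < α < 1 satisfies the generalised zero mean condition: sup_t |∫₀ᵗ sin(s^α)/(1+s) ds| < ∞. -/
/-! On `[0, 1]` the integrand is bounded by `1`. On `[1, t]` write
`sin (s ^ α) / (1 + s) = g s * (d/ds) (-cos (s ^ α))` with
`g s = s ^ (1 - α) / (α * (1 + s))` and integrate by parts: `|g| ≤ 1 / α` bounds the
boundary terms, and `|g' s| ≤ s ^ (-α - 1) / α`, which is integrable on `[1, ∞)`, bounds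
the remaining integral by `1 / α ^ 2`. -/

open Real MeasureTheory Set

theorem abs_integral_mul_deriv_le {a b M : ℝ} {f g g' G F : ℝ → ℝ} (hab : a ≤ b)
    (hF : ∀ x ∈ Icc a b, HasDerivAt F (f x) x) (hg : ∀ x ∈ Icc a b, HasDerivAt g (g' x) x)
    (hf : IntervalIntegrable f volume a b) (hg' : IntervalIntegrable g' volume a b)
    (hFM : ∀ x ∈ Icc a b, |F x| ≤ M) (hg'G : ∀ x ∈ Icc a b, |g' x| ≤ G x)
    (hG : IntervalIntegrable G volume a b) :
    |∫ x in a..b, g x * f x| ≤ M * (|g a| + |g b| + ∫ x in a..b, G x) := by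
  have hgF : ∀ x ∈ Icc a b, |g x * F x| ≤ M * |g x| := fun x hx ↦ by
    rw [abs_mul, mul_comm M]; exact mul_le_mul_of_nonneg_left (hFM x hx) (abs_nonneg _)
  have hrest : ‖∫ x in a..b, g' x * F x‖ ≤ ∫ x in a..b, M * G x := by
    refine intervalIntegral.norm_integral_le_of_norm_le hab
      (Filter.Eventually.of_forall fun x hx ↦ ?_) (hG.const_mul M)
    have hx' := Ioc_subset_Icc_self hx
    rw [Real.norm_eq_abs, abs_mul, mul_comm M]
    exact mul_le_mul (hg'G x hx') (hFM x hx') (abs_nonneg _) ((abs_nonneg _).trans (hg'G x hx'))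
  rw [← uIcc_of_le hab] at hF hg
  rw [intervalIntegral.integral_mul_deriv_eq_deriv_mul hg hF hg' hf]
  rw [intervalIntegral.integral_const_mul, Real.norm_eq_abs] at hrest
  have ha := hgF a (left_mem_Icc.2 hab)
  have hb := hgF b (right_mem_Icc.2 hab)
  calc _ ≤ |g b * F b - g a * F a| + |∫ x in a..b, g' x * F x| := abs_sub _ _
    _ ≤ |g b * F b| + |g a * F a| + |∫ x in a..b, g' x * F x| := by grw [abs_sub]
    _ ≤ _ := by linarith

section

variable {α s : ℝ}

theorem hasDerivAt_neg_cos_rpow (hs : s ≠ 0) :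
    HasDerivAt (fun x ↦ -cos (x ^ α)) (α * s ^ (α - 1) * sin (s ^ α)) s := by
  refine ((hasDerivAt_rpow_const (p := α) (Or.inl hs)).cos).neg.congr_deriv ?_
  ring

theorem hasDerivAt_rpow_one_sub_div (hα : α ≠ 0) (hs : 0 < s) :
    HasDerivAt (fun x ↦ x ^ (1 - α) / (α * (1 + x)))
      (s ^ (-α) * (1 - α - α * s) / (α * (1 + s) ^ 2)) s := by
  have hd := (hasDerivAt_rpow_const (p := 1 - α) (Or.inl hs.ne')).fun_div
    (((hasDerivAt_id' s).const_add 1).const_mul α) (by positivity)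
  refine hd.congr_deriv ?_
  rw [show 1 - α - 1 = -α by ring, show 1 - α = 1 + -α by ring, rpow_add hs, rpow_one]
  field_simp
  ring

theorem sin_rpow_div_one_add_eq_mul (hα : α ≠ 0) (hs : 0 < s) :
    sin (s ^ α) / (1 + s) =
      s ^ (1 - α) / (α * (1 + s)) * (α * s ^ (α - 1) * sin (s ^ α)) := by
  have h : s ^ (1 - α) * s ^ (α - 1) = 1 := by rw [← rpow_add hs]; simp
  field_simp
  rw [mul_assoc, h, mul_one]

theorem abs_rpow_one_sub_div_le (hα0 : 0 < α) (hs : 1 ≤ s) :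
    |s ^ (1 - α) / (α * (1 + s))| ≤ 1 / α := by
  have : s ^ (1 - α) ≤ s := by
    simpa using rpow_le_rpow_of_exponent_le hs (by linarith : 1 - α ≤ 1)
  rw [abs_of_nonneg (by positivity), div_le_div_iff₀ (by positivity) hα0]
  nlinarith

theorem abs_deriv_rpow_one_sub_div_le (hα0 : 0 < α) (hα1 : α ≤ 1) (hs : 0 < s) :
    |s ^ (-α) * (1 - α - α * s) / (α * (1 + s) ^ 2)| ≤ s ^ (-α - 1) / α := by
  have hpow : s ^ (-α) = s ^ (-α - 1) * s := by
    rw [← rpow_add_one hs.ne']; ring_nf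
  have h : |1 - α - α * s| ≤ 1 + s := abs_le.2 ⟨by nlinarith, by nlinarith⟩
  have := rpow_pos_of_pos hs (-α - 1)
  rw [abs_div, abs_mul, abs_of_pos (rpow_pos_of_pos hs _),
    abs_of_pos (by positivity : 0 < α * (1 + s) ^ 2), hpow, div_le_div_iff₀ (by positivity) hα0]
  calc s ^ (-α - 1) * s * |1 - α - α * s| * α ≤ s ^ (-α - 1) * s * (1 + s) * α := by gcongr
    _ ≤ s ^ (-α - 1) * (α * (1 + s) ^ 2) := by
      rw [show s ^ (-α - 1) * (α * (1 + s) ^ 2) = s ^ (-α - 1) * (1 + s) * (1 + s) * α by ring]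
      gcongr
      linarith

theorem integral_rpow_neg_sub_one_div_le (hα : 0 < α) {t : ℝ} (ht : 1 ≤ t) :
    ∫ s in (1 : ℝ)..t, s ^ (-α - 1) / α ≤ 1 / α ^ 2 := by
  have h0 : (0 : ℝ) ∉ uIcc 1 t := by rw [uIcc_of_le ht]; exact fun h ↦ by linarith [h.1]
  rw [intervalIntegral.integral_div, integral_rpow (Or.inr ⟨by linarith, h0⟩)]
  have hval : (t ^ (-α - 1 + 1) - 1 ^ (-α - 1 + 1)) / (-α - 1 + 1) / α =
      (1 - t ^ (-α)) / α ^ 2 := by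
    rw [show -α - 1 + 1 = -α by ring, one_rpow]
    field_simp
    ring
  rw [hval]
  have : 0 < t ^ (-α) := rpow_pos_of_pos (by linarith) _
  gcongr
  linarith

theorem intervalIntegrable_sin_rpow_div_one_add (hα : 0 ≤ α) {a b : ℝ} (ha : 0 ≤ a)
    (hb : 0 ≤ b) :
    IntervalIntegrable (fun s ↦ sin (s ^ α) / (1 + s)) volume a b := by
  apply ContinuousOn.intervalIntegrable
  refine continuousOn_of_forall_continuousAt fun x hx ↦ ?_
  have hx0 : 0 ≤ x := (le_min ha hb).trans hx.1
  fun_prop (disch := first | exact Or.inr hα | positivity)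

theorem abs_integral_zero_sin_rpow_div_one_add_le {t : ℝ} (ht : 0 ≤ t) :
    |∫ s in (0 : ℝ)..t, sin (s ^ α) / (1 + s)| ≤ t := by
  have hbound : ∀ x ∈ uIoc 0 t, ‖sin (x ^ α) / (1 + x)‖ ≤ 1 := fun x hx ↦ by
    have hx0 : 0 < x := by rw [uIoc_of_le ht] at hx; exact hx.1
    rw [Real.norm_eq_abs, abs_div, abs_of_pos (by positivity : 0 < 1 + x),
      div_le_one (by positivity)]
    linarith [abs_sin_le_one (x ^ α)]
  simpa [abs_of_nonneg ht] using intervalIntegral.norm_integral_le_of_norm_le_const hbound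

theorem abs_integral_one_sin_rpow_div_one_add_le (hα0 : 0 < α) (hα1 : α ≤ 1) {t : ℝ}
    (ht : 1 ≤ t) :
    |∫ s in (1 : ℝ)..t, sin (s ^ α) / (1 + s)| ≤ 2 / α + 1 / α ^ 2 := by
  have hpos : ∀ x ∈ Icc 1 t, 0 < x := fun x hx ↦ by linarith [hx.1]
  rw [intervalIntegral.integral_congr (g := fun s ↦ s ^ (1 - α) / (α * (1 + s)) *
    (α * s ^ (α - 1) * sin (s ^ α))) fun x hx ↦
      sin_rpow_div_one_add_eq_mul hα0.ne' (hpos x (by rwa [uIcc_of_le ht] at hx))]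
  have hint : ∀ {h : ℝ → ℝ}, (∀ x ∈ Icc 1 t, ContinuousAt h x) →
      IntervalIntegrable h volume 1 t :=
    fun hh ↦ (continuousOn_of_forall_continuousAt (by rwa [uIcc_of_le ht])).intervalIntegrable
  calc _ ≤ 1 * (|(1 : ℝ) ^ (1 - α) / (α * (1 + 1))| + |t ^ (1 - α) / (α * (1 + t))| +
        ∫ s in (1 : ℝ)..t, s ^ (-α - 1) / α) :=
      abs_integral_mul_deriv_le ht (F := fun x ↦ -cos (x ^ α))
        (fun x hx ↦ hasDerivAt_neg_cos_rpow (hpos x hx).ne')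
        (fun x hx ↦ hasDerivAt_rpow_one_sub_div hα0.ne' (hpos x hx))
        (hint fun x hx ↦ by fun_prop (disch := exact Or.inl (hpos x hx).ne'))
        (hint fun x hx ↦ by
          have := hpos x hx
          fun_prop (disch := first | exact Or.inl this.ne' | positivity))
        (fun x _ ↦ by simpa using abs_cos_le_one _)
        (fun x hx ↦ abs_deriv_rpow_one_sub_div_le hα0 hα1 (hpos x hx))
        (hint fun x hx ↦ by
          fun_prop (disch := first | exact Or.inl (hpos x hx).ne' | positivity))
    _ ≤ 1 * (1 / α + 1 / α + 1 / α ^ 2) := by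
      gcongr
      · exact abs_rpow_one_sub_div_le hα0 le_rfl
      · exact abs_rpow_one_sub_div_le hα0 ht
      · exact integral_rpow_neg_sub_one_div_le hα0 ht
    _ = 2 / α + 1 / α ^ 2 := by ring

end

theorem sin_rpow_zero_mean (α : ℝ) (hα0 : 0 < α) (hα1 : α < 1) :
    ∃ K : ℝ, ∀ t : ℝ, 0 ≤ t →
      |∫ s in (0:ℝ)..t, Real.sin (s ^ α) / (1 + s)| ≤ K := by
  refine ⟨1 + (2 / α + 1 / α ^ 2), fun t ht ↦ ?_⟩
  have hK : 0 ≤ 2 / α + 1 / α ^ 2 := by positivity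
  rcases le_total t 1 with h | h
  · linarith [abs_integral_zero_sin_rpow_div_one_add_le (α := α) ht]
  · rw [← intervalIntegral.integral_add_adjacent_intervals
      (intervalIntegrable_sin_rpow_div_one_add hα0.le le_rfl zero_le_one)
      (intervalIntegrable_sin_rpow_div_one_add hα0.le zero_le_one ht)]
    calc _ ≤ _ := abs_add_le _ _
      _ ≤ 1 + (2 / α + 1 / α ^ 2) :=
        add_le_add
          (by simpa using abs_integral_zero_sin_rpow_div_one_add_le (α := α) zero_le_one)
          (abs_integral_one_sin_rpow_div_one_add_le hα0 hα1.le h)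
end

section
/- For 0 < α < 1, the improper integral ∫₀^∞ sin(s^α)/(1+s) ds converges, and the tail satisfies |∫_θ^∞ sin(s^α)/(1+s) ds| ≲ θ^{-α} for θ ≥ 1. -/
/-!
Since `d/ds (-cos (s ^ α)) = α s ^ (α - 1) sin (s ^ α)`, one integration by parts on `[1, T]`
writes `sin (s ^ α) / (1 + s)` as `H' + g` with the boundary term
`H s = -cos (s ^ α) s ^ (1 - α) / (α (1 + s)) = O(s^{-α})` and `g = O(s^{-α-1})`.
The integral of `g` converges absolutely with tail `O(θ^{-α})`, and `H θ → 0` at the same rate.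
-/

open Real MeasureTheory Filter Set Topology intervalIntegral

section RpowTail

variable {g : ℝ → ℝ} {a c β : ℝ}

lemma integrableOn_Ioi_of_abs_le_rpow (hβ : 0 < β) (ha : 0 < a) (hg : ContinuousOn g (Ioi a))
    (hle : ∀ s, a < s → |g s| ≤ c * s ^ (-β - 1)) : IntegrableOn g (Ioi a) :=
  ((integrableOn_Ioi_rpow_of_lt (by linarith) ha).const_mul c).mono'
    (hg.aestronglyMeasurable measurableSet_Ioi)
    ((ae_restrict_mem measurableSet_Ioi).mono fun s hs => hle s hs)

lemma abs_integral_Ioi_le_rpow (hβ : 0 < β) (ha : 0 < a)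
    (hle : ∀ s, a < s → |g s| ≤ c * s ^ (-β - 1)) :
    |∫ s in Ioi a, g s| ≤ c / β * a ^ (-β) := by
  have hint : ∫ s in Ioi a, c * s ^ (-β - 1) = c / β * a ^ (-β) := by
    rw [MeasureTheory.integral_const_mul, integral_Ioi_rpow_of_lt (by linarith) ha, sub_add_cancel]
    field_simp
  rw [← hint, ← Real.norm_eq_abs]
  exact norm_integral_le_of_norm_le
    ((integrableOn_Ioi_rpow_of_lt (a := -β - 1) (by linarith) ha).const_mul c)
    ((ae_restrict_mem measurableSet_Ioi).mono fun s hs => hle s hs)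

lemma tendsto_zero_of_abs_le_rpow {u : ℝ → ℝ} (hβ : 0 < β)
    (hle : ∀ s, 1 ≤ s → |u s| ≤ c * s ^ (-β)) : Tendsto u atTop (𝓝 0) := by
  refine squeeze_zero_norm' (eventually_ge_atTop 1 |>.mono hle) ?_
  simpa using (tendsto_rpow_neg_atTop hβ).const_mul c

end RpowTail

theorem exists_tendsto_intervalIntegral_of_hasDerivAt_add {f g H : ℝ → ℝ} {β c₁ c₂ : ℝ}
    (hβ : 0 < β) (hf : ContinuousOn f (Ici 0)) (hg : ContinuousOn g (Ici 1))
    (hH : ∀ s, 1 ≤ s → HasDerivAt H (f s - g s) s)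
    (hH_le : ∀ s, 1 ≤ s → |H s| ≤ c₁ * s ^ (-β))
    (hg_le : ∀ s, 1 ≤ s → |g s| ≤ c₂ * s ^ (-β - 1)) :
    ∃ I : ℝ, Tendsto (fun T => ∫ s in (0:ℝ)..T, f s) atTop (𝓝 I) ∧
      ∃ C : ℝ, ∀ θ, 1 ≤ θ → |I - ∫ s in (0:ℝ)..θ, f s| ≤ C * θ ^ (-β) := by
  have hg_le' : ∀ θ, 1 ≤ θ → ∀ s, θ < s → |g s| ≤ c₂ * s ^ (-β - 1) :=
    fun θ hθ s hs => hg_le s (hθ.trans hs.le)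
  have hg_int : IntegrableOn g (Ioi 1) :=
    integrableOn_Ioi_of_abs_le_rpow hβ one_pos (hg.mono Ioi_subset_Ici_self) (hg_le' 1 le_rfl)
  have hf_int : ∀ a b, 0 ≤ a → 0 ≤ b → IntervalIntegrable f volume a b := fun a b ha hb =>
    (hf.mono fun s hs => le_trans (le_min ha hb) hs.1).intervalIntegrable
  set I := (∫ s in (0:ℝ)..1, f s) - H 1 + ∫ s in Ioi 1, g s
  have key : ∀ T, 1 ≤ T → ∫ s in (0:ℝ)..T, f s = I + H T - ∫ s in Ioi T, g s := by
    intro T hT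
    have hf_int₁ := hf_int 1 T zero_le_one (by linarith)
    have hg_int₁ : IntervalIntegrable g volume 1 T :=
      (hg.mono fun s hs => by simpa [hT] using hs.1).intervalIntegrable
    have hderiv : ∫ s in (1:ℝ)..T, (f s - g s) = H T - H 1 :=
      integral_eq_sub_of_hasDerivAt (fun s hs => hH s (by simpa [hT] using hs.1))
        (hf_int₁.sub hg_int₁)
    rw [integral_sub hf_int₁ hg_int₁, ← integral_Ioi_sub_Ioi hg_int hT] at hderiv
    rw [← integral_add_adjacent_intervals (hf_int 0 1 le_rfl zero_le_one) hf_int₁]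
    linear_combination hderiv
  refine ⟨I, ?_, c₁ + c₂ / β, fun θ hθ => ?_⟩
  · have hH0 := tendsto_zero_of_abs_le_rpow hβ hH_le
    have htail := tendsto_zero_of_abs_le_rpow (c := c₂ / β) hβ fun θ hθ =>
      abs_integral_Ioi_le_rpow hβ (by linarith) (hg_le' θ hθ)
    refine Tendsto.congr' ((eventually_ge_atTop 1).mono fun T hT => (key T hT).symm) ?_
    simpa using (tendsto_const_nhds.add hH0).sub htail
  · rw [key θ hθ]
    calc |I - (I + H θ - ∫ s in Ioi θ, g s)| ≤ |H θ| + |∫ s in Ioi θ, g s| := by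
          rw [show I - (I + H θ - ∫ s in Ioi θ, g s) = -H θ + ∫ s in Ioi θ, g s by ring]
          exact (abs_add_le _ _).trans_eq (by rw [abs_neg])
      _ ≤ c₁ * θ ^ (-β) + c₂ / β * θ ^ (-β) :=
          add_le_add (hH_le θ hθ) (abs_integral_Ioi_le_rpow hβ (by linarith) (hg_le' θ hθ))
      _ = (c₁ + c₂ / β) * θ ^ (-β) := by ring

-- Chosen so that `rpowWeight α s * (α * s ^ (α - 1)) = 1 / (1 + s)`.
noncomputable def rpowWeight (α s : ℝ) : ℝ := s ^ (1 - α) / (α * (1 + s))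

noncomputable def rpowWeightDeriv (α s : ℝ) : ℝ :=
  s ^ (-α) * (1 - α - α * s) / (α * (1 + s) ^ 2)

lemma abs_cos_mul_le (x y : ℝ) : |cos x * y| ≤ |y| := by
  rw [abs_mul]
  exact mul_le_of_le_one_left (abs_nonneg y) (abs_cos_le_one x)

section RpowWeight

variable {α s : ℝ}

lemma rpow_one_sub_eq_rpow_neg_mul (hs : 0 < s) : s ^ (1 - α) = s ^ (-α) * s := by
  rw [← rpow_add_one hs.ne']; ring_nf

lemma hasDerivAt_rpowWeight (hα : α ≠ 0) (hs : 0 < s) :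
    HasDerivAt (rpowWeight α) (rpowWeightDeriv α s) s := by
  have hnum : HasDerivAt (fun s => s ^ (1 - α)) ((1 - α) * s ^ (-α)) s := by
    simpa using hasDerivAt_rpow_const (p := 1 - α) (Or.inl hs.ne')
  have hden : HasDerivAt (fun s => α * (1 + s)) α s := by
    simpa using ((hasDerivAt_id s).const_add 1).const_mul α
  refine (hnum.div hden (by positivity)).congr_deriv ?_
  rw [rpowWeightDeriv, rpow_one_sub_eq_rpow_neg_mul hs]
  field_simp
  ring

lemma hasDerivAt_neg_cos_rpow_mul_rpowWeight (hα : α ≠ 0) (hs : 0 < s) :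
    HasDerivAt (fun s => -cos (s ^ α) * rpowWeight α s)
      (sin (s ^ α) / (1 + s) - cos (s ^ α) * rpowWeightDeriv α s) s := by
  have hcos : HasDerivAt (fun s => -cos (s ^ α)) (sin (s ^ α) * (α * s ^ (α - 1))) s :=
    (hasDerivAt_rpow_const (p := α) (Or.inl hs.ne')).cos.neg.congr_deriv (by ring)
  refine (hcos.mul (hasDerivAt_rpowWeight hα hs)).congr_deriv ?_
  have hcancel : s ^ (α - 1) * s ^ (1 - α) = 1 := by
    rw [← rpow_add hs]; simp
  rw [rpowWeight]
  field_simp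
  linear_combination sin (s ^ α) * hcancel

lemma abs_rpowWeight_le (hα : 0 < α) (hs : 0 < s) :
    |rpowWeight α s| ≤ α⁻¹ * s ^ (-α) := by
  have hpos := rpow_pos_of_pos hs (-α)
  rw [rpowWeight, rpow_one_sub_eq_rpow_neg_mul hs, abs_of_nonneg (by positivity),
    div_le_iff₀ (by positivity)]
  field_simp
  nlinarith

lemma abs_rpowWeightDeriv_le (hα : 0 < α) (hs : 0 < s) :
    |rpowWeightDeriv α s| ≤ (1 + α) / α * s ^ (-α - 1) := by
  have hpos := rpow_pos_of_pos hs (-α)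
  have hlin : |1 - α - α * s| ≤ (1 + α) * (1 + s) := abs_le.2 ⟨by nlinarith, by nlinarith⟩
  rw [rpowWeightDeriv, abs_div, abs_mul, abs_of_pos hpos,
    abs_of_pos (show 0 < α * (1 + s) ^ 2 by positivity), rpow_sub_one hs.ne',
    div_le_iff₀ (by positivity)]
  calc s ^ (-α) * |1 - α - α * s| ≤ s ^ (-α) * ((1 + α) * (1 + s)) := by gcongr
    _ ≤ (1 + α) / α * (s ^ (-α) / s) * (α * (1 + s) ^ 2) := by
      field_simp
      nlinarith

end RpowWeight

theorem sin_rpow_improper_integral_general (α : ℝ) (hα0 : 0 < α) :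
    ∃ I : ℝ,
      Filter.Tendsto (fun T : ℝ => ∫ s in (0:ℝ)..T, Real.sin (s ^ α) / (1 + s))
        Filter.atTop (nhds I) ∧
      ∃ C : ℝ, ∀ θ : ℝ, 1 ≤ θ →
        |I - ∫ s in (0:ℝ)..θ, Real.sin (s ^ α) / (1 + s)| ≤ C * θ ^ (-α) := by
  refine exists_tendsto_intervalIntegral_of_hasDerivAt_add (c₁ := α⁻¹) (c₂ := (1 + α) / α)
    (H := fun s => -cos (s ^ α) * rpowWeight α s)
    (g := fun s => cos (s ^ α) * rpowWeightDeriv α s) hα0 ?_ ?_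
    (fun s hs => hasDerivAt_neg_cos_rpow_mul_rpowWeight hα0.ne' (by linarith)) (fun s hs => ?_)
    (fun s hs => (abs_cos_mul_le _ _).trans (abs_rpowWeightDeriv_le hα0 (by linarith)))
  · refine continuousOn_of_forall_continuousAt fun s (hs : 0 ≤ s) => ?_
    fun_prop (disch := first | positivity | (right; positivity))
  · refine continuousOn_of_forall_continuousAt fun s (hs : 1 ≤ s) => ?_
    have : 0 < s := by linarith
    unfold rpowWeightDeriv
    fun_prop (disch := first | positivity | (left; positivity))
  · rw [neg_mul, abs_neg]
    exact (abs_cos_mul_le _ _).trans (abs_rpowWeight_le hα0 (by linarith))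

theorem sin_rpow_improper_integral (α : ℝ) (hα0 : 0 < α) (hα1 : α < 1) :
    ∃ I : ℝ,
      Filter.Tendsto (fun T : ℝ => ∫ s in (0:ℝ)..T, Real.sin (s ^ α) / (1 + s))
        Filter.atTop (nhds I) ∧
      ∃ C : ℝ, ∀ θ : ℝ, 1 ≤ θ →
        |I - ∫ s in (0:ℝ)..θ, Real.sin (s ^ α) / (1 + s)| ≤ C * θ ^ (-α) :=
  sin_rpow_improper_integral_general α hα0
end

section
/- For every k ≥ 0 and 0 < α < 1, the k-th derivative of t ↦ sin(t^α)/(1+t) satisfies |d^k/dt^k [sin(t^α)/(1+t)]| ≤ C_k (1+t)^{-1-k(1-α)} for all t ≥ 1. -/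
/-!
Write `t ^ a * (1 + t) ^ b * sin (t ^ α + φ)` for an oscillatory term of order `a + b`. On `t > 0`
the derivative of such a term is a sum of three such terms, of orders `a + b - 1`, `a + b - 1` and
`a + b - (1 - α)`, using `cos x = sin (x + π / 2)`; for `α ≥ 0` all three have order at most
`a + b - (1 - α)`. Hence the `k`-th derivative of `sin (t ^ α) / (1 + t)`, a term of order `-1`, is a
finite sum of terms of order at most `-1 - k (1 - α)`, and on `t ≥ 1` a term of order `e` is bounded
by a constant times `(1 + t) ^ e`, because `t ^ a ≤ 2 ^ |a| * (1 + t) ^ a` there.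
-/

open Real Set

noncomputable def oscTerm (α c a b φ t : ℝ) : ℝ := c * t ^ a * (1 + t) ^ b * sin (t ^ α + φ)

theorem hasDerivAt_oscTerm {α c a b φ t : ℝ} (ht : 0 < t) :
    HasDerivAt (oscTerm α c a b φ)
      (oscTerm α (c * a) (a - 1) b φ t + oscTerm α (c * b) a (b - 1) φ t
        + oscTerm α (c * α) (a + α - 1) b (φ + π / 2) t) t := by
  have h1t : 1 + t ≠ 0 := by linarith
  have hpow := (hasDerivAt_rpow_const (p := a) (Or.inl ht.ne')).const_mul c
  have hshift := (hasDerivAt_rpow_const (p := b) (Or.inl h1t)).comp t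
    ((hasDerivAt_id t).const_add 1)
  have hsin := ((hasDerivAt_rpow_const (p := α) (Or.inl ht.ne')).add_const φ).sin
  refine ((hpow.mul hshift).mul hsin).congr_deriv ?_
  simp only [oscTerm, Pi.mul_apply, Function.comp_apply, ← add_assoc, sin_add_pi_div_two,
    show a + α - 1 = a + (α - 1) by ring, rpow_add ht]
  ring

theorem rpow_le_two_rpow_abs_mul_one_add_rpow {t : ℝ} (ht : 1 ≤ t) (a : ℝ) :
    t ^ a ≤ 2 ^ |a| * (1 + t) ^ a := by
  have ht0 : 0 < t := by linarith
  rcases le_or_gt 0 a with ha | ha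
  · calc t ^ a ≤ (1 + t) ^ a := rpow_le_rpow ht0.le (by linarith) ha
      _ ≤ 2 ^ |a| * (1 + t) ^ a :=
        le_mul_of_one_le_left (by positivity) (one_le_rpow (by norm_num) (abs_nonneg a))
  · have h2t : (2 * t) ^ a ≤ (1 + t) ^ a := rpow_le_rpow_of_nonpos (by linarith) (by linarith) ha.le
    rw [mul_rpow (by norm_num) ht0.le] at h2t
    calc t ^ a = 2 ^ |a| * (2 ^ a * t ^ a) := by
          rw [abs_of_neg ha, ← mul_assoc, ← rpow_add (by norm_num), neg_add_cancel, rpow_zero,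
            one_mul]
      _ ≤ 2 ^ |a| * (1 + t) ^ a := by gcongr

theorem abs_oscTerm_le {α c a b φ t : ℝ} (ht : 1 ≤ t) :
    |oscTerm α c a b φ t| ≤ |c| * 2 ^ |a| * (1 + t) ^ (a + b) := by
  have ht0 : 0 < t := by linarith
  have h1t : 0 < 1 + t := by linarith
  calc |oscTerm α c a b φ t| = |c| * t ^ a * (1 + t) ^ b * |sin (t ^ α + φ)| := by
        simp only [oscTerm, abs_mul, abs_of_pos (rpow_pos_of_pos ht0 a),
          abs_of_pos (rpow_pos_of_pos h1t b)]
    _ ≤ |c| * (2 ^ |a| * (1 + t) ^ a) * (1 + t) ^ b * 1 := by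
        gcongr
        · exact rpow_le_two_rpow_abs_mul_one_add_rpow ht a
        · exact abs_sin_le_one _
    _ = |c| * 2 ^ |a| * (1 + t) ^ (a + b) := by rw [rpow_add h1t]; ring

inductive IsOscSum (α e : ℝ) : (ℝ → ℝ) → Prop
  | term (c a b φ : ℝ) (h : a + b ≤ e) : IsOscSum α e (oscTerm α c a b φ)
  | add {f g : ℝ → ℝ} : IsOscSum α e f → IsOscSum α e g → IsOscSum α e (f + g)

namespace IsOscSum

variable {α e : ℝ} {f : ℝ → ℝ}

theorem exists_hasDerivAt (hα : 0 ≤ α) (hf : IsOscSum α e f) :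
    ∃ g, IsOscSum α (e - (1 - α)) g ∧ ∀ t, 0 < t → HasDerivAt f (g t) t := by
  induction hf with
  | term c a b φ h =>
    refine ⟨_, ((term _ _ _ _ ?_).add (term _ _ _ _ ?_)).add (term _ _ _ _ ?_),
      fun t ht => hasDerivAt_oscTerm ht⟩ <;> linarith
  | add _ _ ihf ihg =>
    obtain ⟨f', hf', hff'⟩ := ihf
    obtain ⟨g', hg', hgg'⟩ := ihg
    exact ⟨f' + g', hf'.add hg', fun t ht => (hff' t ht).add (hgg' t ht)⟩

theorem exists_eqOn_iteratedDeriv (hα : 0 ≤ α) (hf : IsOscSum α e f) (k : ℕ) :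
    ∃ g, IsOscSum α (e - k * (1 - α)) g ∧ EqOn (iteratedDeriv k f) g (Ioi 0) := by
  induction k with
  | zero => exact ⟨f, by simpa using hf, fun t _ => rfl⟩
  | succ k ih =>
    obtain ⟨g, hg, hfg⟩ := ih
    obtain ⟨g', hg', hgg'⟩ := hg.exists_hasDerivAt hα
    refine ⟨g', by convert hg' using 1; push_cast; ring, fun t (ht : 0 < t) => ?_⟩
    rw [iteratedDeriv_succ, (Filter.eventuallyEq_of_mem (Ioi_mem_nhds ht) hfg).deriv_eq]
    exact (hgg' t ht).deriv

theorem exists_pos_abs_le (hf : IsOscSum α e f) :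
    ∃ C, 0 < C ∧ ∀ t, 1 ≤ t → |f t| ≤ C * (1 + t) ^ e := by
  induction hf with
  | term c a b φ h =>
    refine ⟨|c| * 2 ^ |a| + 1, by positivity, fun t ht => ?_⟩
    have h1t : 1 ≤ 1 + t := by linarith
    calc |oscTerm α c a b φ t| ≤ |c| * 2 ^ |a| * (1 + t) ^ (a + b) := abs_oscTerm_le ht
      _ ≤ (|c| * 2 ^ |a| + 1) * (1 + t) ^ e := by
        gcongr
        linarith
  | @add f g _ _ ihf ihg =>
    obtain ⟨C, hC, hfC⟩ := ihf
    obtain ⟨D, hD, hgD⟩ := ihg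
    refine ⟨C + D, by positivity, fun t ht => ?_⟩
    calc |(f + g) t| ≤ _ := abs_add_le _ _
      _ ≤ _ := add_le_add (hfC t ht) (hgD t ht)
      _ = _ := (add_mul _ _ _).symm

end IsOscSum

theorem sin_rpow_derivative_bounds_general (α : ℝ) (hα0 : 0 < α) (k : ℕ) :
    ∃ C : ℝ, 0 < C ∧ ∀ t : ℝ, 1 ≤ t →
      |iteratedDeriv k (fun s : ℝ => Real.sin (s ^ α) / (1 + s)) t|
        ≤ C * (1 + t) ^ (-1 - (k : ℝ) * (1 - α)) := by
  have hF : (fun s : ℝ => Real.sin (s ^ α) / (1 + s)) = oscTerm α 1 0 (-1) 0 := by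
    ext s; simp [oscTerm, rpow_neg_one, div_eq_inv_mul]
  obtain ⟨g, hg, hFg⟩ :=
    (IsOscSum.term (α := α) (e := -1) 1 0 (-1) 0 (by norm_num)).exists_eqOn_iteratedDeriv hα0.le k
  obtain ⟨C, hC, hgC⟩ := hg.exists_pos_abs_le
  refine ⟨C, hC, fun t ht => ?_⟩
  rw [hF, hFg (show 0 < t by linarith)]
  exact hgC t ht

theorem sin_rpow_derivative_bounds (α : ℝ) (hα0 : 0 < α) (hα1 : α < 1) (k : ℕ) :
    ∃ C : ℝ, 0 < C ∧ ∀ t : ℝ, 1 ≤ t →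
      |iteratedDeriv k (fun s : ℝ => Real.sin (s ^ α) / (1 + s)) t|
        ≤ C * (1 + t) ^ (-1 - (k : ℝ) * (1 - α)) :=
  sin_rpow_derivative_bounds_general α hα0 k
end
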